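/- arXiv:2305.12226 — 8 statements merged into one kernel-verified Lean document; each statement's English description precedes it below -/
import Mathlib

section
/- Every finitely generated ideal of A is generated by at most two elements: for every finitely generated ideal I of A there exist a, b ∈ A such that I is the ideal generated by {a, b}. -/
/-!
Every ideal of a Dedekind domain is generated by two elements, and a finitely generated ideal
of `A` is extended from the integral closure `B` of `k[t]` in the finite extension of `K`
generated by its generators, so it suffices that `B` is Dedekind. That holds when this
extension is separable. In general, a power `x ↦ x ^ q ^ n` of Frobenius moves the finitely
many generators into the separable closure of `K`, and its inverse, which preserves
integrality over `k[t]`, maps the integral closure in the resulting separable extension into `A`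
with the original generators in its image.
-/

open Ideal

theorem Ideal.exists_eq_span_pair_of_isDedekindDomain {R : Type*} [CommRing R]
    [IsDedekindDomain R] (I : Ideal R) : ∃ a b : R, I = span {a, b} := by
  rcases eq_or_ne I ⊥ with rfl | hI
  · exact ⟨0, 0, by simp⟩
  · obtain ⟨x, hxI, hx⟩ := Submodule.exists_mem_ne_zero_of_ne_bot hI
    exact ⟨x, IsDedekindDomain.exists_eq_span_pair hxI hx⟩

theorem Ideal.exists_span_eq_span_pair_of_subset_range {B A : Type*} [CommRing B]
    [IsDedekindDomain B] [CommRing A] (σ : B →+* A) {S : Set A} (hS : S ⊆ Set.range σ) :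
    ∃ a b : A, span S = span {a, b} := by
  obtain ⟨a, b, hab⟩ := (span (σ ⁻¹' S)).exists_eq_span_pair_of_isDedekindDomain
  refine ⟨σ a, σ b, ?_⟩
  rw [← Set.image_pair, ← map_span, ← hab, map_span, Set.image_preimage_eq_of_subset hS]

theorem eventually_pow_mem_separableClosure (K : Type*) {Ω : Type*} [Field K] [Field Ω]
    [Algebra K Ω] [Algebra.IsAlgebraic K Ω] (q : ℕ) [ExpChar K q] (x : Ω) :
    ∀ᶠ n in Filter.atTop, x ^ q ^ n ∈ separableClosure K Ω := by
  obtain ⟨n, y, hy⟩ := IsPurelyInseparable.pow_mem (separableClosure K Ω) q x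
  filter_upwards [Filter.eventually_ge_atTop n] with m hm
  rw [← Nat.sub_add_cancel hm, pow_add, pow_mul', ← hy]
  exact pow_mem y.2 _

theorem integralClosure.exists_span_eq_span_pair (R K : Type*) {Ω : Type*} [CommRing R]
    [IsDedekindDomain R] [Field K] [Algebra R K] [IsFractionRing R K] [Field Ω] [Algebra R Ω]
    [Algebra K Ω] [IsScalarTower R K Ω] [Algebra.IsAlgebraic K Ω] [PerfectField Ω]
    (S : Finset (integralClosure R Ω)) :
    ∃ a b : integralClosure R Ω, span (S : Set (integralClosure R Ω)) = span {a, b} := by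
  obtain ⟨q, _⟩ := ExpChar.exists K
  have := expChar_of_injective_algebraMap (algebraMap K Ω).injective q
  obtain ⟨n, hn⟩ := ((Filter.eventually_all_finset S).2 fun x _ =>
    eventually_pow_mem_separableClosure K q (x : Ω)).exists
  let φ := iterateFrobeniusEquiv Ω q n
  have hφ (x : Ω) : φ x = x ^ q ^ n := by
    rw [iterateFrobeniusEquiv_apply, iterateFrobenius_def]
  let L := IntermediateField.adjoin K ((fun x : integralClosure R Ω => φ x) '' S)
  have : FiniteDimensional K L := IntermediateField.finiteDimensional_adjoin fun y _ =>
    (Algebra.IsAlgebraic.isAlgebraic y).isIntegral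
  have : Algebra.IsSeparable K L :=
    (IntermediateField.isSeparable_adjoin_iff_isSeparable K Ω).2 <| by
      rintro _ ⟨x, hx, rfl⟩
      exact mem_separableClosure_iff.1 (by simpa only [hφ] using hn x hx)
  have := integralClosure.isDedekindDomain R K L
  let ι : L →ₐ[R] Ω := L.val.restrictScalars R
  let σ : integralClosure R L →+* integralClosure R Ω :=
    ((φ.symm : Ω →+* Ω).comp ι).restrict _ _ fun y hy =>
      IsIntegral.of_pow (pow_pos (expChar_pos K q) n) <| by
        simpa [← hφ] using hy.map ι
  refine exists_span_eq_span_pair_of_subset_range σ fun x hx => ?_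
  have hxL : φ x ∈ L := IntermediateField.subset_adjoin K _ ⟨x, hx, rfl⟩
  refine ⟨⟨⟨φ x, hxL⟩, (isIntegral_algHom_iff ι ι.injective).1 ?_⟩, Subtype.ext ?_⟩
  · exact (hφ x).symm ▸ x.2.pow _
  · exact φ.symm_apply_apply x

theorem every_fg_ideal_two_generated_general
    (k : Type*) [Field k]
    (Ω : Type*) [Field Ω] [Algebra (Polynomial k) Ω] [Algebra (RatFunc k) Ω]
    [IsScalarTower (Polynomial k) (RatFunc k) Ω] [IsAlgClosure (RatFunc k) Ω]
    (I : Ideal (integralClosure (Polynomial k) Ω)) (hI : I.FG) :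
    ∃ a b : integralClosure (Polynomial k) Ω, I = Ideal.span {a, b} := by
  obtain ⟨S, rfl⟩ := hI
  have := IsAlgClosure.isAlgClosed (RatFunc k) (K := Ω)
  have : Algebra.IsAlgebraic (RatFunc k) Ω := IsAlgClosure.isAlgebraic
  exact integralClosure.exists_span_eq_span_pair (Polynomial k) (RatFunc k) S

/-- Let `k` be an algebraically closed field, `K = k(t)` the fraction field of
`k[t]`, `Ω` a fixed algebraic closure of `K`, and `A` the integral closure of `k[t]` in `Ω`.
Every finitely generated ideal of `A` is generated by at most two elements. -/
theorem every_fg_ideal_two_generated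
    (k : Type*) [Field k] [IsAlgClosed k]
    (Ω : Type*) [Field Ω] [Algebra (Polynomial k) Ω] [Algebra (RatFunc k) Ω]
    [IsScalarTower (Polynomial k) (RatFunc k) Ω] [IsAlgClosure (RatFunc k) Ω]
    (I : Ideal (integralClosure (Polynomial k) Ω)) (hI : I.FG) :
    ∃ a b : integralClosure (Polynomial k) Ω, I = Ideal.span {a, b} :=
  every_fg_ideal_two_generated_general k Ω I hI
end

section
/- For every function m from the set of nonzero prime ideals of R to the natural numbers that is zero outside a finite set, there exist nonzero elements f, g ∈ R such that for every nonzero prime ideal p of R one has min(v_p(f), v_p(g)) = m(p). -/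
open scoped Classical

open UniqueFactorizationMonoid

lemma exists_count_eq_aux
    (R : Type*) [CommRing R] [IsDomain R] [IsDedekindDomain R]
    (s : Finset (Ideal R)) (hs : s.Nonempty)
    (hsp : ∀ p ∈ s, p.IsPrime ∧ p ≠ ⊥) (e : Ideal R → ℕ) :
    ∃ f : R, f ≠ 0 ∧ ∀ p ∈ s,
      Multiset.count p (normalizedFactors (Ideal.span {f})) = e p := by
  -- choose representatives x p ∈ p^(e p) \ p^(e p + 1)
  have hlt : ∀ p ∈ s, ∃ x : R, x ∈ p ^ (e p) ∧ x ∉ p ^ (e p + 1) := by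
    intro p hp
    obtain ⟨hprime, hbot⟩ := hsp p hp
    have hne : (p : Ideal R) ^ (e p + 1) ≠ p ^ (e p) := by
      intro h
      have h0 : (p : Ideal R) ^ (e p) ≠ 0 := pow_ne_zero _ hbot
      have : (p : Ideal R) ^ (e p) * p = p ^ (e p) * 1 := by
        rw [mul_one, ← pow_succ, h]
      have := mul_left_cancel₀ h0 this
      exact hprime.ne_top (by simpa [Ideal.one_eq_top] using this)
    have hle : (p : Ideal R) ^ (e p + 1) ≤ p ^ (e p) :=
      Ideal.pow_le_pow_right (Nat.le_succ _)
    obtain ⟨x, hx1, hx2⟩ := SetLike.exists_of_lt (lt_of_le_of_ne hle hne)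
    exact ⟨x, hx1, hx2⟩
  choose x hx1 hx2 using hlt
  obtain ⟨y, hy⟩ := IsDedekindDomain.exists_forall_sub_mem_ideal (s := s)
    (fun p => p) (fun p => e p + 1)
    (fun p hp => Ideal.prime_of_isPrime (hsp p hp).2 (hsp p hp).1)
    (fun i hi j hj hij => hij) (fun p => x p p.2)
  have hmem : ∀ p (hp : p ∈ s), y ∈ p ^ (e p) := by
    intro p hp
    have := hy p hp
    have hx := hx1 p hp
    have : y = (y - x p hp) + x p hp := by ring
    rw [this]
    exact add_mem (Ideal.pow_le_pow_right (Nat.le_succ _) (hy p hp)) hx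
  have hnmem : ∀ p (hp : p ∈ s), y ∉ p ^ (e p + 1) := by
    intro p hp hmem'
    apply hx2 p hp
    have : x p hp = y - (y - x p hp) := by ring
    rw [this]
    exact sub_mem hmem' (hy p hp)
  obtain ⟨q, hq⟩ := hs
  have hy0 : y ≠ 0 := by
    intro h
    exact hnmem q hq (by simp [h])
  refine ⟨y, hy0, fun p hp => ?_⟩
  have : p.IsPrime := (hsp p hp).1
  exact Ideal.count_normalizedFactors_eq
    ((Ideal.span_singleton_le_iff_mem _).mpr (hmem p hp))
    (fun h => hnmem p hp ((Ideal.span_singleton_le_iff_mem _).mp h))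

/-- Let `R` be a Dedekind domain which is not a field.  For every function `m`
from the nonzero prime ideals of `R` to `ℕ` which is zero outside a finite set, there are nonzero
`f, g ∈ R` such that for every nonzero prime ideal `p` of `R` one has
`min (v_p f) (v_p g) = m p`, where `v_p` is the multiplicity of `p` in the factorization of the
corresponding principal ideal into prime ideals. -/
theorem exists_min_valuation_eq
    (R : Type*) [CommRing R] [IsDomain R] [IsDedekindDomain R] (hR : ¬ IsField R)
    (m : Ideal R → ℕ)
    (hfin : {p : Ideal R | p.IsPrime ∧ p ≠ ⊥ ∧ m p ≠ 0}.Finite) :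
    ∃ f g : R, f ≠ 0 ∧ g ≠ 0 ∧ ∀ p : Ideal R, p.IsPrime → p ≠ ⊥ →
      min (Multiset.count p (UniqueFactorizationMonoid.normalizedFactors (Ideal.span {f})))
          (Multiset.count p (UniqueFactorizationMonoid.normalizedFactors (Ideal.span {g})))
        = m p := by
  obtain ⟨M, hM⟩ := Ideal.exists_maximal R
  have hMbot : M ≠ ⊥ := Ring.ne_bot_of_isMaximal_of_not_isField hM hR
  set S : Finset (Ideal R) := hfin.toFinset with hS
  have hmS : ∀ p, p ∉ S → p.IsPrime → p ≠ ⊥ → m p = 0 := by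
    intro p hp h1 h2
    by_contra h3
    exact hp (hfin.mem_toFinset.mpr ⟨h1, h2, h3⟩)
  set s₁ : Finset (Ideal R) := insert M S with hs₁
  have hs₁p : ∀ p ∈ s₁, p.IsPrime ∧ p ≠ ⊥ := by
    intro p hp
    rcases Finset.mem_insert.mp hp with h | h
    · exact ⟨h ▸ hM.isPrime, h ▸ hMbot⟩
    · exact ⟨(hfin.mem_toFinset.mp h).1, (hfin.mem_toFinset.mp h).2.1⟩
  obtain ⟨f, hf0, hf⟩ := exists_count_eq_aux R s₁ ⟨M, Finset.mem_insert_self _ _⟩ hs₁p m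
  have hspan : Ideal.span ({f} : Set R) ≠ 0 := by
    simpa [Ideal.span_singleton_eq_bot] using hf0
  set T : Finset (Ideal R) := (normalizedFactors (Ideal.span ({f} : Set R))).toFinset with hT
  set s₂ : Finset (Ideal R) := s₁ ∪ T with hs₂
  have hs₂p : ∀ p ∈ s₂, p.IsPrime ∧ p ≠ ⊥ := by
    intro p hp
    rcases Finset.mem_union.mp hp with h | h
    · exact hs₁p p h
    · have hpr : Prime p := prime_of_normalized_factor p (Multiset.mem_toFinset.mp h)
      exact ⟨Ideal.isPrime_of_prime hpr, hpr.ne_zero⟩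
  obtain ⟨g, hg0, hg⟩ := exists_count_eq_aux R s₂
    ⟨M, Finset.mem_union_left _ (Finset.mem_insert_self _ _)⟩ hs₂p m
  refine ⟨f, g, hf0, hg0, fun p hp1 hp2 => ?_⟩
  by_cases hps : p ∈ s₂
  · have hvg : Multiset.count p (normalizedFactors (Ideal.span {g})) = m p := hg p hps
    by_cases hps1 : p ∈ s₁
    · rw [hf p hps1, hvg, min_self]
    · -- p ∈ T \ s₁, so m p = 0
      have hmp : m p = 0 := by
        apply hmS p _ hp1 hp2
        intro h
        exact hps1 (Finset.mem_insert_of_mem h)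
      rw [hvg, hmp, Nat.min_zero]
  · have hpt : p ∉ T := fun h => hps (Finset.mem_union_right _ h)
    have hvf : Multiset.count p (normalizedFactors (Ideal.span {f})) = 0 :=
      Multiset.count_eq_zero.mpr (fun h => hpt (Multiset.mem_toFinset.mpr h))
    have hmp : m p = 0 := by
      apply hmS p _ hp1 hp2
      intro h
      exact hps (Finset.mem_union_left _ (Finset.mem_insert_of_mem h))
    rw [hvf, hmp, Nat.zero_min]
end

section
/- Every nonzero ideal of R is generated by at most two elements: for every nonzero ideal I of R there exist g, h ∈ I with I equal to the ideal generated by {g, h}. -/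
theorem nonzero_ideal_two_generated_general
    (R : Type*) [CommRing R] [IsDedekindDomain R]
    (I : Ideal R) (hI : I ≠ ⊥) :
    ∃ g h : R, g ∈ I ∧ h ∈ I ∧ I = Ideal.span {g, h} := by
  obtain ⟨g, hgI, hg⟩ := Submodule.exists_mem_ne_zero_of_ne_bot hI
  obtain ⟨h, hI_eq⟩ := IsDedekindDomain.exists_eq_span_pair hgI hg
  have hhI : h ∈ I := hI_eq ▸ Ideal.subset_span (Set.mem_insert_of_mem g rfl)
  exact ⟨g, h, hgI, hhI, hI_eq⟩

/-- In a Dedekind domain `R`, every nonzero ideal is generated by at most two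
elements. -/
theorem nonzero_ideal_two_generated
    (R : Type*) [CommRing R] [IsDomain R] [IsDedekindDomain R]
    (I : Ideal R) (hI : I ≠ ⊥) :
    ∃ g h : R, g ∈ I ∧ h ∈ I ∧ I = Ideal.span {g, h} :=
  nonzero_ideal_two_generated_general R I hI
end

section
/- The class group of A (the group of invertible fractional ideals of A modulo principal fractional ideals) is divisible: for every class c in the class group of A and every integer n ≥ 1 there exists a class d with n • d = c. -/
/-!
Let `R` be integrally closed with algebraically closed fraction field `K` (for instance `A`,
with `K = Ω`). An invertible fractional ideal `I` is the `n`-th power of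
`J = span {x | x ^ n ∈ I}`: `I ≤ J ^ n` since every element of `K` is an `n`-th power, and
`J ^ n ≤ I` since `y ^ n ∈ I ^ n` forces `y ∈ I`, because the `n`-th power of `(y) I⁻¹` lies
in `R`, hence so does `(y) I⁻¹`.
-/

open FractionalIdeal nonZeroDivisors Pointwise

section

variable {R : Type*} [CommRing R] [IsIntegrallyClosed R]
  {K : Type*} [Field K] [Algebra R K] [IsFractionRing R K] {n : ℕ}

theorem IsIntegrallyClosed.isInteger_of_isInteger_pow (hn : n ≠ 0) {x : K}
    (hx : IsLocalization.IsInteger R (x ^ n)) : IsLocalization.IsInteger R x := by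
  obtain ⟨a, ha⟩ := hx
  have : IsIntegral R (x ^ n) := ha ▸ isIntegral_algebraMap
  exact IsIntegrallyClosed.isIntegral_iff.mp (this.of_pow (Nat.pos_of_ne_zero hn))

namespace FractionalIdeal

theorem le_one_of_pow_le_one (hn : n ≠ 0) {M : FractionalIdeal R⁰ K} (hM : M ^ n ≤ 1) :
    M ≤ 1 := fun x hx =>
  (mem_one_iff R⁰).mpr <| IsIntegrallyClosed.isInteger_of_isInteger_pow hn <|
    (mem_one_iff R⁰).mp <| hM <| by
      rw [← mem_coe, coe_pow]; exact Submodule.pow_mem_pow _ hx n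

theorem mem_of_pow_mem_pow (hn : n ≠ 0) (I : (FractionalIdeal R⁰ K)ˣ) {y : K}
    (hy : y ^ n ∈ (I : FractionalIdeal R⁰ K) ^ n) : y ∈ (I : FractionalIdeal R⁰ K) := by
  set M := spanSingleton R⁰ y * ↑I⁻¹
  have hMn : M ^ n ≤ 1 := calc
    M ^ n = spanSingleton R⁰ (y ^ n) * ↑I⁻¹ ^ n := by rw [mul_pow, spanSingleton_pow]
    _ ≤ ↑I ^ n * ↑I⁻¹ ^ n := by gcongr; exact spanSingleton_le_iff_mem.mpr hy
    _ = 1 := by rw [← mul_pow, Units.mul_inv, one_pow]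
  rw [← spanSingleton_le_iff_mem]
  calc spanSingleton R⁰ y = M * ↑I := by rw [mul_assoc, Units.inv_mul, mul_one]
    _ ≤ 1 * ↑I := by gcongr; exact le_one_of_pow_le_one hn hMn
    _ = ↑I := one_mul _

theorem isFractional_span_setOf_pow_mem (hn : n ≠ 0) (I : FractionalIdeal R⁰ K) :
    IsFractional R⁰ (Submodule.span R {x : K | x ^ n ∈ I}) := by
  obtain ⟨d, hd, hdI⟩ := I.isFractional
  refine isFractional_span_iff.mpr ⟨d, hd, fun b hb => ?_⟩
  refine IsIntegrallyClosed.isInteger_of_isInteger_pow hn ?_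
  have hpow : (d • b) ^ n = d ^ (n - 1) • d • b ^ n := by
    rw [smul_pow, smul_smul, ← pow_succ, Nat.sub_add_cancel (Nat.pos_of_ne_zero hn)]
  rw [hpow]
  exact IsLocalization.isInteger_smul (hdI _ hb)

variable [IsAlgClosed K]

theorem exists_pow_eq_of_isAlgClosed (hn : n ≠ 0) (I : (FractionalIdeal R⁰ K)ˣ) :
    ∃ J : (FractionalIdeal R⁰ K)ˣ, J ^ n = I := by
  set S := {x : K | x ^ n ∈ (I : FractionalIdeal R⁰ K)}
  let J : FractionalIdeal R⁰ K := ⟨Submodule.span R S, isFractional_span_setOf_pow_mem hn _⟩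
  have hJn : J ^ n = I := by
    apply le_antisymm
    · rw [← coe_le_coe, coe_pow]
      change Submodule.span R S ^ n ≤ _
      rw [Submodule.span_pow, Submodule.span_le]
      intro y hy
      have : y ^ n ∈ (I : FractionalIdeal R⁰ K) ^ n := by
        rw [← mem_coe, coe_pow]
        exact Submodule.pow_subset_pow _ <|
          Set.preimage_pow_subset (powMonoidHom n : K →* K) _ n hy
      exact mem_of_pow_mem_pow hn I this
    · intro y hy
      obtain ⟨x, rfl⟩ := IsAlgClosed.exists_pow_nat_eq y (Nat.pos_of_ne_zero hn)
      rw [← mem_coe, coe_pow]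
      exact Submodule.pow_mem_pow _ (Submodule.subset_span (show x ∈ S from hy)) n
  have hJ : IsUnit J := (isUnit_pow_iff hn).mp (hJn ▸ I.isUnit)
  exact ⟨hJ.unit, Units.ext (by rw [Units.val_pow_eq_pow_val, hJ.unit_spec, hJn])⟩

end FractionalIdeal

end

theorem ClassGroup.exists_pow_eq_of_isAlgClosed {R : Type*} [CommRing R] [IsDomain R]
    [IsIntegrallyClosed R] (K : Type*) [Field K] [Algebra R K] [IsFractionRing R K]
    [IsAlgClosed K] {n : ℕ} (hn : n ≠ 0) (c : ClassGroup R) :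
    ∃ d : ClassGroup R, d ^ n = c := by
  refine ClassGroup.induction K (fun I => ?_) c
  obtain ⟨J, hJ⟩ := FractionalIdeal.exists_pow_eq_of_isAlgClosed hn I
  exact ⟨ClassGroup.mk K J, by rw [← map_pow, hJ]⟩

namespace integralClosure

theorem isFractionRing_of_isAlgebraic (A K L : Type*) [CommRing A] [IsDomain A] [Field K]
    [Field L] [Algebra A K] [IsFractionRing A K] [Algebra K L] [Algebra A L]
    [IsScalarTower A K L] [Algebra.IsAlgebraic K L] : IsFractionRing (integralClosure A L) L :=
  have : Algebra.IsAlgebraic A L := (IsFractionRing.comap_isAlgebraic_iff (K := K)).mpr ‹_›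
  isFractionRing_of_algebraic fun _ hx => IsFractionRing.to_map_eq_zero_iff.mp <|
    (map_eq_zero (algebraMap K L)).mp <| (IsScalarTower.algebraMap_apply A K L _).symm.trans hx

theorem isIntegrallyClosed_of_isAlgebraic (A K L : Type*) [CommRing A] [IsDomain A] [Field K]
    [Field L] [Algebra A K] [IsFractionRing A K] [Algebra K L] [Algebra A L]
    [IsScalarTower A K L] [Algebra.IsAlgebraic K L] : IsIntegrallyClosed (integralClosure A L) :=
  have := isFractionRing_of_isAlgebraic A K L
  (IsIntegrallyClosed.integralClosure_eq_bot_iff L).mp integralClosure_idem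

end integralClosure

theorem classGroup_divisible_general
    (k : Type*) [Field k]
    (Ω : Type*) [Field Ω] [Algebra (Polynomial k) Ω] [Algebra (RatFunc k) Ω]
    [IsScalarTower (Polynomial k) (RatFunc k) Ω] [IsAlgClosure (RatFunc k) Ω]
    (c : ClassGroup (integralClosure (Polynomial k) Ω)) (n : ℕ) (hn : 1 ≤ n) :
    ∃ d : ClassGroup (integralClosure (Polynomial k) Ω), d ^ n = c := by
  have : IsAlgClosed Ω := IsAlgClosure.isAlgClosed (RatFunc k)
  have := integralClosure.isFractionRing_of_isAlgebraic (Polynomial k) (RatFunc k) Ω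
  have := integralClosure.isIntegrallyClosed_of_isAlgebraic (Polynomial k) (RatFunc k) Ω
  exact ClassGroup.exists_pow_eq_of_isAlgClosed Ω (by omega) c

/-- Let `A` be the integral closure of `k[t]` in an algebraic closure `Ω` of
`k(t)`, `k` algebraically closed.  The class group of `A` (invertible fractional ideals modulo
principal ones) is divisible: every class is an `n`-th multiple for every `n ≥ 1` (written
multiplicatively: every class has an `n`-th root). -/
theorem classGroup_divisible
    (k : Type*) [Field k] [IsAlgClosed k]
    (Ω : Type*) [Field Ω] [Algebra (Polynomial k) Ω] [Algebra (RatFunc k) Ω]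
    [IsScalarTower (Polynomial k) (RatFunc k) Ω] [IsAlgClosure (RatFunc k) Ω]
    (c : ClassGroup (integralClosure (Polynomial k) Ω)) (n : ℕ) (hn : 1 ≤ n) :
    ∃ d : ClassGroup (integralClosure (Polynomial k) Ω), d ^ n = c :=
  classGroup_divisible_general k Ω c n hn
end

section
/- The class group of A (the group of invertible fractional ideals of A modulo principal fractional ideals) is torsion-free: if c is a class in the class group of A, n ≥ 1 is an integer, and n • c = 0, then c = 0. -/
/-!
`A` is integrally closed and its fraction field `Ω` is algebraically closed. If `I ^ n = (x)`,
pick `y` with `y ^ n = x`, so that `I ^ n = (y) ^ n`. It remains to see that the invertible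
fractional ideals of an integrally closed domain form a torsion-free group. If `J ^ n = 1`, each
`z ∈ J` has `z ^ n ∈ J ^ n = A`, so `z` is integral over `A` and `J ≤ 1`; likewise
`J ^ (n - 1) ≤ 1`, and then `1 = J * J ^ (n - 1) ≤ J`.
-/

open scoped nonZeroDivisors

namespace FractionalIdeal

variable {R K : Type*} [CommRing R] [IsIntegrallyClosed R] [Field K] [Algebra R K]
  [IsFractionRing R K]

theorem le_one_of_pow_eq_one {I : FractionalIdeal R⁰ K} {n : ℕ} (hn : n ≠ 0) (h : I ^ n = 1) :
    I ≤ 1 := by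
  intro x hx
  have hxn : x ^ n ∈ ((I ^ n : FractionalIdeal R⁰ K) : Submodule R K) := by
    rw [coe_pow]; exact Submodule.pow_mem_pow _ hx n
  rw [h] at hxn
  obtain ⟨y, hy⟩ := (mem_one_iff R⁰).mp hxn
  have hint : IsIntegral R x :=
    IsIntegral.of_pow (Nat.pos_of_ne_zero hn) (hy ▸ isIntegral_algebraMap)
  exact (mem_one_iff R⁰).mpr (IsIntegrallyClosed.isIntegral_iff.mp hint)

theorem eq_one_of_pow_eq_one {I : FractionalIdeal R⁰ K} {n : ℕ} (hn : n ≠ 0) (h : I ^ n = 1) :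
    I = 1 := by
  have hI : I ≤ 1 := le_one_of_pow_eq_one hn h
  have hI' : I ^ (n - 1) ≤ 1 :=
    le_one_of_pow_eq_one hn (by rw [← pow_mul, mul_comm, pow_mul, h, one_pow])
  refine le_antisymm hI ?_
  calc 1 = I * I ^ (n - 1) := by rw [← pow_succ', Nat.sub_add_cancel (Nat.pos_of_ne_zero hn), h]
    _ ≤ I * 1 := mul_le_mul_right hI' I
    _ = I := mul_one I

instance : IsMulTorsionFree (FractionalIdeal R⁰ K)ˣ :=
  IsMulTorsionFree.of_not_isOfFinOrder fun u hu hfin => by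
    obtain ⟨n, hn, hun⟩ := hfin.exists_pow_eq_one
    refine hu (Units.ext (eq_one_of_pow_eq_one hn.ne' ?_))
    rw [← Units.val_pow_eq_pow_val, hun, Units.val_one]

end FractionalIdeal

namespace ClassGroup

variable {R K : Type*} [CommRing R] [IsDomain R] [Field K] [Algebra R K] [IsFractionRing R K]

theorem mk_eq_one_iff_exists_toPrincipalIdeal_eq {I : (FractionalIdeal R⁰ K)ˣ} :
    mk K I = 1 ↔ ∃ x : Kˣ, toPrincipalIdeal R K x = I := by
  rw [mk_eq_one_iff, FractionalIdeal.isPrincipal_iff, ← MonoidHom.mem_range,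
    mem_principal_ideals_iff]
  simp only [eq_comm]

variable (K) in
theorem isMulTorsionFree_of_isAlgClosed [IsIntegrallyClosed R] [IsAlgClosed K] :
    IsMulTorsionFree (ClassGroup R) :=
  IsMulTorsionFree.of_not_isOfFinOrder fun c hc hfin => hc <| by
    obtain ⟨n, hn, hcn⟩ := hfin.exists_pow_eq_one
    clear hc hfin
    revert hcn
    refine ClassGroup.induction K (fun I hIn => ?_) c
    rw [← map_pow, mk_eq_one_iff_exists_toPrincipalIdeal_eq] at hIn
    obtain ⟨x, hx⟩ := hIn
    obtain ⟨y, hy⟩ := IsAlgClosed.exists_pow_nat_eq (x : K) hn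
    have hy0 : y ≠ 0 := by rintro rfl; exact x.ne_zero (by rw [← hy, zero_pow hn.ne'])
    have hyn : toPrincipalIdeal R K (Units.mk0 y hy0) ^ n = I ^ n := by
      rw [← map_pow, ← hx]; congr 1; ext; simp [hy]
    exact mk_eq_one_iff_exists_toPrincipalIdeal_eq.mpr ⟨_, pow_left_injective hn.ne' hyn⟩

end ClassGroup

namespace integralClosure

variable {R : Type*} [CommRing R] [IsDomain R] {L : Type*} [Field L] [Algebra R L]

theorem isFractionRing_of_isAlgebraic_of_isScalarTower (F : Type*) [Field F] [Algebra R F]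
    [IsFractionRing R F] [Algebra F L] [IsScalarTower R F L] [Algebra.IsAlgebraic F L] :
    IsFractionRing (integralClosure R L) L :=
  have : Algebra.IsAlgebraic R L := IsFractionRing.comap_isAlgebraic_iff.mpr ‹_›
  isFractionRing_of_algebraic fun _ hx => IsFractionRing.to_map_eq_zero_iff.mp <|
    (map_eq_zero (algebraMap F L)).mp <| (IsScalarTower.algebraMap_apply R F L _).symm.trans hx

theorem isIntegrallyClosed_of_isAlgebraic_of_isScalarTower (F : Type*) [Field F] [Algebra R F]
    [IsFractionRing R F] [Algebra F L] [IsScalarTower R F L] [Algebra.IsAlgebraic F L] :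
    IsIntegrallyClosed (integralClosure R L) :=
  have := isFractionRing_of_isAlgebraic_of_isScalarTower (R := R) (L := L) F
  (IsIntegrallyClosed.integralClosure_eq_bot_iff L).mp integralClosure_idem

end integralClosure

theorem classGroup_torsionFree_general
    (k : Type*) [Field k]
    (Ω : Type*) [Field Ω] [Algebra (Polynomial k) Ω] [Algebra (RatFunc k) Ω]
    [IsScalarTower (Polynomial k) (RatFunc k) Ω] [IsAlgClosure (RatFunc k) Ω]
    (c : ClassGroup (integralClosure (Polynomial k) Ω)) (n : ℕ) (hn : 1 ≤ n)
    (hc : c ^ n = 1) :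
    c = 1 := by
  have : Algebra.IsAlgebraic (RatFunc k) Ω := IsAlgClosure.isAlgebraic
  have : IsAlgClosed Ω := IsAlgClosure.isAlgClosed (RatFunc k)
  have : IsFractionRing (integralClosure (Polynomial k) Ω) Ω :=
    integralClosure.isFractionRing_of_isAlgebraic_of_isScalarTower (RatFunc k)
  have : IsIntegrallyClosed (integralClosure (Polynomial k) Ω) :=
    integralClosure.isIntegrallyClosed_of_isAlgebraic_of_isScalarTower (RatFunc k)
  have : IsMulTorsionFree (ClassGroup (integralClosure (Polynomial k) Ω)) :=
    ClassGroup.isMulTorsionFree_of_isAlgClosed Ω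
  exact (pow_eq_one_iff_left (by lia)).mp hc

/-- Let `A` be the integral closure of `k[t]` in an algebraic closure `Ω` of
`k(t)`, `k` algebraically closed.  The class group of `A` is torsion-free: if `n ≥ 1` and the
`n`-th multiple of a class is trivial (multiplicatively: `c ^ n = 1`), then the class is
trivial. -/
theorem classGroup_torsionFree
    (k : Type*) [Field k] [IsAlgClosed k]
    (Ω : Type*) [Field Ω] [Algebra (Polynomial k) Ω] [Algebra (RatFunc k) Ω]
    [IsScalarTower (Polynomial k) (RatFunc k) Ω] [IsAlgClosure (RatFunc k) Ω]
    (c : ClassGroup (integralClosure (Polynomial k) Ω)) (n : ℕ) (hn : 1 ≤ n)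
    (hc : c ^ n = 1) :
    c = 1 :=
  classGroup_torsionFree_general k Ω c n hn hc
end

section
/- Let I be a nonzero ideal of R, f ∈ R nonzero, and m ≥ 1 an integer such that I^m is the principal ideal generated by f. Let g ∈ L satisfy g^m = f. Then g ∈ S, and the extension of I to S (the ideal of S generated by the image of I under the inclusion R → S) equals the principal ideal of S generated by g. -/
/-! Since `g ^ m = f`, the element `g` is integral, and extending `I ^ m = (f)` to `S` gives
`(I S) ^ m = (g) ^ m`. Ideals of a Dedekind domain factor uniquely into primes, so taking `m`-th
roots of ideals is injective and `I S = (g)`. -/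

theorem Ideal.map_eq_span_singleton_of_pow_eq {R S : Type*} [CommRing R] [CommRing S]
    [IsDedekindDomain S] [Algebra R S] {I : Ideal R} {f : R} {m : ℕ} (hm : m ≠ 0)
    (hIm : I ^ m = Ideal.span {f}) {g : S} (hg : g ^ m = algebraMap R S f) :
    I.map (algebraMap R S) = Ideal.span {g} := by
  refine (pow_left_inj hm).mp ?_
  rw [← Ideal.map_pow, hIm, Ideal.map_span, Set.image_singleton, ← hg,
    Ideal.span_singleton_pow]

theorem extended_ideal_eq_span_root_general
    (R : Type*) [CommRing R]
    (L : Type*) [Field L] [Algebra R L]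
    [IsDedekindDomain (integralClosure R L)]
    (I : Ideal R) (f : R)
    (m : ℕ) (hm : 1 ≤ m) (hIm : I ^ m = Ideal.span {f})
    (g : L) (hg : g ^ m = algebraMap R L f) :
    ∃ hgS : g ∈ integralClosure R L,
      Ideal.map (algebraMap R (integralClosure R L)) I
        = Ideal.span {(⟨g, hgS⟩ : integralClosure R L)} := by
  have hgS : g ∈ integralClosure R L :=
    IsIntegral.of_pow hm (hg ▸ isIntegral_algebraMap)
  refine ⟨hgS, Ideal.map_eq_span_singleton_of_pow_eq (by omega) hIm (Subtype.ext ?_)⟩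
  simpa using hg

/-- Let `R` be a Dedekind domain with fraction field `K`, `L` a finite
extension of `K`, and `S = integralClosure R L` (assumed Dedekind).  If `I` is a nonzero ideal
of `R`, `f ∈ R` is nonzero, `m ≥ 1`, `I ^ m = (f)`, and `g ∈ L` satisfies `g ^ m = f`, then
`g` is integral over `R` and the extension of `I` to `S` is the principal ideal generated by
`g`. -/
theorem extended_ideal_eq_span_root
    (R : Type*) [CommRing R] [IsDomain R] [IsDedekindDomain R]
    (K L : Type*) [Field K] [Field L] [Algebra R K] [IsFractionRing R K]
    [Algebra K L] [Algebra R L] [IsScalarTower R K L] [FiniteDimensional K L]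
    [IsDedekindDomain (integralClosure R L)]
    (I : Ideal R) (hI : I ≠ ⊥) (f : R) (hf : f ≠ 0)
    (m : ℕ) (hm : 1 ≤ m) (hIm : I ^ m = Ideal.span {f})
    (g : L) (hg : g ^ m = algebraMap R L f) :
    ∃ hgS : g ∈ integralClosure R L,
      Ideal.map (algebraMap R (integralClosure R L)) I
        = Ideal.span {(⟨g, hgS⟩ : integralClosure R L)} :=
  extended_ideal_eq_span_root_general R L I f m hm hIm g hg
end

section
/- For every nonzero ideal I of R, the relative ideal norm (from S down to R) of the extended ideal I·S (the ideal of S generated by the image of I) equals I^n, where n = [L : K] is the degree of the extension. -/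
/-!
Once the field norms of elements of `S` are recognised as values of `Algebra.intNorm R S`, the
left-hand side is `Ideal.relNorm R (I.map _)`. Localizing at a maximal ideal of `R` makes `I`
principal, say `(a)`, and `N(a) = a ^ n`; so that norm is `I ^ finrank R S`, and
`finrank R S = finrank K L` because `L` is the fraction field of `S`.
-/

namespace Ideal

variable {A K L B : Type*} [CommRing A] [IsDomain A] [IsIntegrallyClosed A] [Field K] [Field L]
  [CommRing B] [IsDomain B] [IsIntegrallyClosed B] [Algebra A B] [Module.Finite A B]
  [Module.IsTorsionFree A B] [Algebra A K] [IsFractionRing A K] [Algebra K L] [Algebra A L]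
  [IsScalarTower A K L] [Algebra B L] [IsScalarTower A B L] [IsIntegralClosure B A L]
  [FiniteDimensional K L]

theorem spanNorm_eq_span_norm (J : Ideal B) :
    spanNorm A J =
      span {r : A | ∃ x ∈ J, algebraMap A K r = Algebra.norm K (algebraMap B L x)} := by
  refine congrArg span (Set.ext fun r => exists_congr fun x => and_congr_right fun _ => ?_)
  rw [← Algebra.algebraMap_intNorm (A := A) (K := K), eq_comm]
  exact (IsFractionRing.injective A K).eq_iff.symm

end Ideal

theorem relNorm_map_eq_pow_general
    (R : Type*) [CommRing R] [IsDedekindDomain R]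
    (K L : Type*) [Field K] [Field L] [Algebra R K] [IsFractionRing R K]
    [Algebra K L] [Algebra R L] [IsScalarTower R K L]
    [FiniteDimensional K L] [Algebra.IsSeparable K L]
    (I : Ideal R) :
    Ideal.span {r : R | ∃ x ∈ Ideal.map (algebraMap R (integralClosure R L)) I,
        algebraMap R K r = Algebra.norm K (x : L)}
      = I ^ (Module.finrank K L) := by
  have : FaithfulSMul R L := .trans R K L
  have : IsDedekindDomain (integralClosure R L) := integralClosure.isDedekindDomain R K L
  have : Module.Finite R (integralClosure R L) := IsIntegralClosure.finite R K L _
  have : IsFractionRing (integralClosure R L) L :=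
    IsIntegralClosure.isFractionRing_of_finite_extension R K L _
  refine (Ideal.spanNorm_eq_span_norm (K := K) _).symm.trans ?_
  rw [Ideal.spanNorm_eq, Ideal.relNorm_algebraMap,
    IsFractionRing.finrank_eq R K (integralClosure R L) L]

/-- Let `R` be a Dedekind domain with fraction field `K`, `L/K` a finite
separable extension of degree `n`, and `S = integralClosure R L`.  For every nonzero ideal `I`
of `R`, the relative ideal norm of the extended ideal `I·S` — the ideal of `R` generated by
the elements of `R` whose image in `K` is the field norm `N_{L/K}(x)` of some `x ∈ I·S` —
equals `I ^ n`. -/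
theorem relNorm_map_eq_pow
    (R : Type*) [CommRing R] [IsDomain R] [IsDedekindDomain R]
    (K L : Type*) [Field K] [Field L] [Algebra R K] [IsFractionRing R K]
    [Algebra K L] [Algebra R L] [IsScalarTower R K L]
    [FiniteDimensional K L] [Algebra.IsSeparable K L]
    (I : Ideal R) (hI : I ≠ ⊥) :
    Ideal.span {r : R | ∃ x ∈ Ideal.map (algebraMap R (integralClosure R L)) I,
        algebraMap R K r = Algebra.norm K (x : L)}
      = I ^ (Module.finrank K L) :=
  relNorm_map_eq_pow_general R K L I
end

section
/- Let I be a nonzero ideal of R. If the extended ideal I·S (the ideal of S generated by the image of I) is a principal ideal of S, then I^n is a principal ideal of R, where n = [L : K]. -/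
/-!
If `α` generates `I·S`, then taking relative ideal norms from `S` down to `R` gives
`I ^ [S : R] = N(I·S) = N(α)·R`. For `S` the integral closure of `R` in `L`, the `R`-rank of `S`
is `[L : K]`.
-/

open Module

theorem Ideal.pow_finrank_isPrincipal_of_map_isPrincipal {R S : Type*} [CommRing R] [CommRing S]
    [IsDedekindDomain R] [IsDedekindDomain S] [Algebra R S] [Module.Finite R S]
    [IsTorsionFree R S] {I : Ideal R} (h : (I.map (algebraMap R S)).IsPrincipal) :
    (I ^ finrank R S).IsPrincipal := by
  obtain ⟨α, hα⟩ := h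
  rw [← relNorm_algebraMap S I, hα, ← Ideal.span, relNorm_singleton]
  exact ⟨_, rfl⟩

theorem integralClosure.finrank_eq (R K L : Type*) [CommRing R] [IsDomain R] [Field K] [Field L]
    [Algebra R K] [IsFractionRing R K] [Algebra K L] [Algebra R L] [IsScalarTower R K L]
    [FiniteDimensional K L] :
    finrank R (integralClosure R L) = finrank K L :=
  have : IsFractionRing (integralClosure R L) L :=
    IsIntegralClosure.isFractionRing_of_finite_extension R K L (integralClosure R L)
  (IsFractionRing.finrank_eq R K (integralClosure R L) L).symm

theorem pow_isPrincipal_of_map_isPrincipal_general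
    (R : Type*) [CommRing R] [IsDedekindDomain R]
    (K L : Type*) [Field K] [Field L] [Algebra R K] [IsFractionRing R K]
    [Algebra K L] [Algebra R L] [IsScalarTower R K L]
    [FiniteDimensional K L] [Algebra.IsSeparable K L]
    (I : Ideal R)
    (h : (Ideal.map (algebraMap R (integralClosure R L)) I).IsPrincipal) :
    (I ^ (Module.finrank K L)).IsPrincipal := by
  have := integralClosure.isDedekindDomain R K L
  have := IsIntegralClosure.finite R K L (integralClosure R L)
  have : FaithfulSMul R L := FaithfulSMul.trans R K L
  have := IsIntegralClosure.isTorsionFree R L (A := integralClosure R L)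
  rw [← integralClosure.finrank_eq R K L]
  exact Ideal.pow_finrank_isPrincipal_of_map_isPrincipal h

/-- Let `R` be a Dedekind domain with fraction field `K`, `L/K` a finite
separable extension of degree `n`, and `S = integralClosure R L` (a Dedekind domain).  If the
extension `I·S` of a nonzero ideal `I` of `R` is principal, then `I ^ n` is principal, where
`n = [L : K]`. -/
theorem pow_isPrincipal_of_map_isPrincipal
    (R : Type*) [CommRing R] [IsDomain R] [IsDedekindDomain R]
    (K L : Type*) [Field K] [Field L] [Algebra R K] [IsFractionRing R K]
    [Algebra K L] [Algebra R L] [IsScalarTower R K L]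
    [FiniteDimensional K L] [Algebra.IsSeparable K L]
    (I : Ideal R) (hI : I ≠ ⊥)
    (h : (Ideal.map (algebraMap R (integralClosure R L)) I).IsPrincipal) :
    (I ^ (Module.finrank K L)).IsPrincipal :=
  pow_isPrincipal_of_map_isPrincipal_general R K L I h
end
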